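/- If m, r ∈ ℕ satisfy 2 < r and 2r ≤ m, and none of the numbers m−4, m−3, m−2, m−1 is a triangular number, then u_r + u_{m−r} ≥ 1 + u_1 + u_{m−1}. -/
import Mathlib


variable {V : Type} [Fintype V] [DecidableEq V]

/-- The `k`-th triangular number `t_k = C(k+1,2)`. -/
def tri (k : ℕ) : ℕ := (k + 1).choose 2

/-- A natural number is triangular if it equals `t_k` for some `k`. -/
def IsTriangular (m : ℕ) : Prop := ∃ k, m = tri k

/-- `uval r = max {k : t_k ≤ r}`. -/
def uval (r : ℕ) : ℕ := Nat.findGreatest (fun k => tri k ≤ r) r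

lemma tri_succ (k : ℕ) : tri (k + 1) = tri k + (k + 1) := by
  show (k + 1 + 1).choose 2 = tri k + (k + 1)
  rw [Nat.choose_succ_succ (k + 1) 1, Nat.choose_one_right]
  simp [tri, Nat.add_comm]

lemma tri_add (a b : ℕ) : tri (a + b) = tri a + tri b + a * b := by
  induction b with
  | zero => simp [tri]
  | succ n ih =>
    show tri (a + n + 1) = tri a + tri (n + 1) + a * (n + 1)
    have h1 := tri_succ (a + n)
    have h2 := tri_succ n
    have h3 : a * (n + 1) = a * n + a := by ring
    omega

lemma self_le_tri (k : ℕ) : k ≤ tri k := by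
  induction k with
  | zero => simp [tri]
  | succ n ih => have := tri_succ n; omega

lemma tri_mono : Monotone tri := by
  intro a b hab
  induction b with
  | zero => have : a = 0 := by omega
            rw [this]
  | succ n ih =>
    have h0 := tri_succ n
    rcases Nat.lt_or_ge a (n+1) with h | h
    · have := ih (by omega); omega
    · have : a = n + 1 := by omega
      rw [this]

lemma tri_uval_le (r : ℕ) : tri (uval r) ≤ r :=
  Nat.findGreatest_spec (P := fun k => tri k ≤ r) (Nat.zero_le r) (by simp [tri])

lemma lt_tri_uval_succ (r : ℕ) : r < tri (uval r + 1) := by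
  rcases Nat.lt_or_ge r (uval r + 1) with h | h
  · exact lt_of_lt_of_le h (self_le_tri _)
  · by_contra hc
    push_neg at hc
    exact Nat.findGreatest_is_greatest (P := fun k => tri k ≤ r) (n := r)
      (k := uval r + 1) (Nat.lt_succ_self _) h hc

lemma two_le_uval {r : ℕ} (h : 3 ≤ r) : 2 ≤ uval r :=
  Nat.le_findGreatest (by omega) (by simpa [tri] using h)

lemma uval_one : uval 1 = 1 := by decide

/-- If `2 < r`, `2r ≤ m`, and none of `m-4`, `m-3`, `m-2`, `m-1` is triangular,
then `u_r + u_{m-r} ≥ 1 + u_1 + u_{m-1}`. -/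
theorem stmt11 (m r : ℕ) (h1 : 2 < r) (h2 : 2 * r ≤ m)
    (h4 : ¬ IsTriangular (m - 4)) (h3 : ¬ IsTriangular (m - 3))
    (hb : ¬ IsTriangular (m - 2)) (ha : ¬ IsTriangular (m - 1)) :
    1 + uval 1 + uval (m - 1) ≤ uval r + uval (m - r) := by
  have hm6 : 6 ≤ m := by omega
  have hj2 : 2 ≤ uval r := two_le_uval (by omega)
  have hk2 : 2 ≤ uval (m - r) := two_le_uval (by omega)
  obtain ⟨a, hja⟩ : ∃ a, uval r = a + 2 := ⟨uval r - 2, by omega⟩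
  obtain ⟨b, hkb⟩ : ∃ b, uval (m - r) = b + 2 := ⟨uval (m - r) - 2, by omega⟩
  -- bounds from the definition of uval
  have hr1 : r < tri (uval r + 1) := lt_tri_uval_succ r
  have hr2 := tri_succ (uval r)
  have hmr1 : m - r < tri (uval (m - r) + 1) := lt_tri_uval_succ (m - r)
  have hmr2 := tri_succ (uval (m - r))
  have hrle : r ≤ tri (a + 2) + (a + 2) := by rw [hja] at hr1 hr2; omega
  have hmrle : m - r ≤ tri (b + 2) + (b + 2) := by rw [hkb] at hmr1 hmr2; omega
  -- compute tri (a + b + 3)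
  have key : tri (a + b + 3) = tri (a + 2) + tri (b + 2) + a * b + a + b := by
    have h1 := tri_add (a + 2) (b + 1)
    rw [show a + 2 + (b + 1) = a + b + 3 by omega] at h1
    have h2 : tri (b + 2) = tri (b + 1) + (b + 2) := by
      have h := tri_succ (b + 1); rwa [show b + 1 + 1 = b + 2 from rfl] at h
    have h3 : (a + 2) * (b + 1) = a * b + a + 2 * b + 2 := by ring
    rw [h3] at h1
    linarith
  -- so tri (a+b+3) ≥ m - 3
  have hge : m ≤ tri (a + b + 3) + 4 := by
    have hab : (0:ℕ) ≤ a * b := Nat.zero_le _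
    have hmsplit : m ≤ tri (a + 2) + tri (b + 2) + a + b + 4 := by omega
    linarith
  -- since m-3, m-2, m-1 are not triangular, tri (a+b+3) ≥ m
  have hTm : m ≤ tri (a + b + 3) := by
    by_contra hlt
    push_neg at hlt
    have : tri (a + b + 3) = m - 4 ∨ tri (a + b + 3) = m - 3 ∨
        tri (a + b + 3) = m - 2 ∨ tri (a + b + 3) = m - 1 := by omega
    rcases this with h | h | h | h
    · exact h4 ⟨a + b + 3, h.symm⟩
    · exact h3 ⟨a + b + 3, h.symm⟩
    · exact hb ⟨a + b + 3, h.symm⟩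
    · exact ha ⟨a + b + 3, h.symm⟩
  -- hence uval (m-1) ≤ a + b + 2
  have hfin : uval (m - 1) ≤ a + b + 2 := by
    by_contra hc
    push_neg at hc
    have := tri_mono (show a + b + 3 ≤ uval (m - 1) by omega)
    have := tri_uval_le (m - 1)
    omega
  rw [uval_one, hja, hkb]
  omega
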